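/- Suppose there exists δ > 0 such that every graph G with ν_t(G) ≥ (1/4 − δ)·|T_G| satisfies τ_t(G) ≤ 2·ν_t(G). Then every graph G satisfies τ_t(G) ≤ 2·ν_t(G). -/

import Mathlib

/-- `t` is (the vertex set of) a triangle of `G`. -/
def IsTriangle {V : Type*} (G : SimpleGraph V) (t : Finset V) : Prop :=
  t.card = 3 ∧ ∀ x ∈ t, ∀ y ∈ t, x ≠ y → G.Adj x y

/-- The set of (three) edges of the triangle with vertex set `t`. -/
def triEdges {V : Type*} [DecidableEq V] (t : Finset V) : Finset (Sym2 V) :=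
  ((t ×ˢ t).filter fun p => p.1 ≠ p.2).image fun p => s(p.1, p.2)

/-- A triangle cover of `G`: a set of edges of `G` intersecting (the edge set of)
every triangle of `G`. -/
def IsTriangleCover {V : Type*} [DecidableEq V] (G : SimpleGraph V)
    (C : Finset (Sym2 V)) : Prop :=
  (∀ e ∈ C, e ∈ G.edgeSet) ∧
    ∀ t : Finset V, IsTriangle G t → ∃ e ∈ triEdges t, e ∈ C

/-- A triangle packing of `G`: a set of pairwise edge-disjoint triangles. -/
def IsTrianglePacking {V : Type*} [DecidableEq V] (G : SimpleGraph V)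
    (P : Finset (Finset V)) : Prop :=
  (∀ t ∈ P, IsTriangle G t) ∧
    ∀ t₁ ∈ P, ∀ t₂ ∈ P, t₁ ≠ t₂ → Disjoint (triEdges t₁) (triEdges t₂)

/-- The triangle covering number τ_t(G). -/
noncomputable def tauT {V : Type*} [DecidableEq V] (G : SimpleGraph V) : ℕ :=
  sInf {n | ∃ C : Finset (Sym2 V), IsTriangleCover G C ∧ C.card = n}

/-- The triangle packing number ν_t(G). -/
noncomputable def nuT {V : Type*} [DecidableEq V] (G : SimpleGraph V) : ℕ :=
  sSup {n | ∃ P : Finset (Finset V), IsTrianglePacking G P ∧ P.card = n}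

/-- The number of triangles of `G`, i.e. |T_G|. -/
noncomputable def numTris {V : Type*} (G : SimpleGraph V) : ℕ :=
  Set.ncard {t : Finset V | IsTriangle G t}

/-- The number of edges of `G`. -/
noncomputable def numEdges {V : Type*} (G : SimpleGraph V) : ℕ :=
  Set.ncard G.edgeSet


set_option linter.unusedSectionVars false

lemma mem_triEdges {V : Type*} [DecidableEq V] {t : Finset V} {e : Sym2 V} :
    e ∈ triEdges t ↔ ∃ x ∈ t, ∃ y ∈ t, x ≠ y ∧ e = s(x, y) := by
  simp only [triEdges, Finset.mem_image, Finset.mem_filter, Finset.mem_product]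
  constructor
  · rintro ⟨⟨x, y⟩, ⟨⟨hx, hy⟩, hxy⟩, rfl⟩
    exact ⟨x, hx, y, hy, hxy, rfl⟩
  · rintro ⟨x, hx, y, hy, hxy, rfl⟩
    exact ⟨⟨x, y⟩, ⟨⟨hx, hy⟩, hxy⟩, rfl⟩

lemma triEdges_image {V W : Type*} [DecidableEq V] [DecidableEq W] {f : V → W}
    (hf : Function.Injective f) (t : Finset V) :
    triEdges (t.image f) = (triEdges t).image (Sym2.map f) := by
  ext e
  simp only [mem_triEdges, Finset.mem_image]
  constructor
  · rintro ⟨x, ⟨a, ha, rfl⟩, y, ⟨b, hb, rfl⟩, hxy, rfl⟩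
    exact ⟨s(a, b), ⟨a, ha, b, hb, fun h => hxy (by rw [h]), rfl⟩, by simp⟩
  · rintro ⟨e', ⟨a, ha, b, hb, hab, rfl⟩, rfl⟩
    exact ⟨f a, ⟨a, ha, rfl⟩, f b, ⟨b, hb, rfl⟩, fun h => hab (hf h), by simp⟩

universe u

variable {V : Type u}

/-- `G` together with `k` disjoint copies of `K₄`. -/
def addK4 (G : SimpleGraph V) (k : ℕ) : SimpleGraph (V ⊕ (Fin k × Fin 4)) where
  Adj x y := match x, y with
    | .inl a, .inl b => G.Adj a b
    | .inr a, .inr b => a.1 = b.1 ∧ a.2 ≠ b.2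
    | _, _ => False
  symm := by
    refine ⟨?_⟩; rintro (a | a) (b | b) h
    · exact G.adj_symm h
    · exact h.elim
    · exact h.elim
    · exact ⟨h.1.symm, h.2.symm⟩
  loopless := by refine ⟨?_⟩; rintro (a | a) h
                 · exact G.irrefl h
                 · exact h.2 rfl

@[simp] lemma addK4_adj_inl_inl {G : SimpleGraph V} {k : ℕ} {a b : V} :
    (addK4 G k).Adj (Sum.inl a) (Sum.inl b) ↔ G.Adj a b := Iff.rfl

@[simp] lemma addK4_adj_inl_inr {G : SimpleGraph V} {k : ℕ} {a : V} {b : Fin k × Fin 4} :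
    ¬ (addK4 G k).Adj (Sum.inl a) (Sum.inr b) := fun h => h

@[simp] lemma addK4_adj_inr_inl {G : SimpleGraph V} {k : ℕ} {a : V} {b : Fin k × Fin 4} :
    ¬ (addK4 G k).Adj (Sum.inr b) (Sum.inl a) := fun h => h

@[simp] lemma addK4_adj_inr_inr {G : SimpleGraph V} {k : ℕ} {a b : Fin k × Fin 4} :
    (addK4 G k).Adj (Sum.inr a) (Sum.inr b) ↔ a.1 = b.1 ∧ a.2 ≠ b.2 := Iff.rfl

section copyTri
variable [DecidableEq V] {G : SimpleGraph V} {k : ℕ}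

/-- The triangle in the `i`-th copy of `K₄` with vertex set `s`. -/
def copyTri (i : Fin k) (s : Finset (Fin 4)) : Finset (V ⊕ (Fin k × Fin 4)) :=
  s.image fun a => Sum.inr (i, a)

lemma inr_i_injective (i : Fin k) :
    Function.Injective (fun a : Fin 4 => (Sum.inr (i, a) : V ⊕ (Fin k × Fin 4))) := by
  intro a b h; simpa using h

lemma mem_copyTri {i : Fin k} {s : Finset (Fin 4)} {x : V ⊕ (Fin k × Fin 4)} :
    x ∈ (copyTri i s : Finset (V ⊕ (Fin k × Fin 4))) ↔ ∃ a ∈ s, x = Sum.inr (i, a) := by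
  simp [copyTri, eq_comm]

lemma isTriangle_copyTri {i : Fin k} {s : Finset (Fin 4)} (hs : s.card = 3) :
    IsTriangle (addK4 G k) (copyTri i s) := by
  refine ⟨by rw [copyTri, Finset.card_image_of_injective _ (inr_i_injective i), hs], ?_⟩
  intro x hx y hy hxy
  obtain ⟨a, _, rfl⟩ := mem_copyTri.1 hx
  obtain ⟨b, _, rfl⟩ := mem_copyTri.1 hy
  exact ⟨rfl, fun hab => hxy (congrArg (fun z => Sum.inr (i, z)) hab)⟩

lemma eq_image_preimage_of_forall {α β : Type*} [DecidableEq α] [DecidableEq β] {f : α → β}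
    (hf : Function.Injective f) {t : Finset β} (h : ∀ x ∈ t, ∃ a, x = f a) :
    t = (t.preimage f (Set.injOn_of_injective hf)).image f := by
  ext x
  constructor
  · intro hx
    obtain ⟨a, rfl⟩ := h x hx
    exact Finset.mem_image_of_mem f (Finset.mem_preimage.2 hx)
  · intro hx
    obtain ⟨a, ha, rfl⟩ := Finset.mem_image.1 hx
    exact Finset.mem_preimage.1 ha

lemma isTriangle_image_inl {s : Finset V} (hs : IsTriangle G s) :
    IsTriangle (addK4 G k) (s.image Sum.inl) := by
  refine ⟨by rw [Finset.card_image_of_injective _ Sum.inl_injective, hs.1], ?_⟩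
  rintro x hx y hy hxy
  obtain ⟨a, ha, rfl⟩ := Finset.mem_image.1 hx
  obtain ⟨b, hb, rfl⟩ := Finset.mem_image.1 hy
  exact hs.2 a ha b hb (fun hab => hxy (by rw [hab]))

/-- Classification of the triangles of `addK4 G k`. -/
lemma isTriangle_addK4_iff {t : Finset (V ⊕ (Fin k × Fin 4))} :
    IsTriangle (addK4 G k) t ↔
      (∃ s : Finset V, IsTriangle G s ∧ t = s.image Sum.inl) ∨
      (∃ i : Fin k, ∃ s : Finset (Fin 4), s.card = 3 ∧ t = copyTri i s) := by
  constructor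
  · rintro ⟨hc, hadj⟩
    have hne : t.Nonempty := Finset.card_pos.1 (by omega)
    obtain ⟨x₀, hx₀⟩ := hne
    match x₀, hx₀ with
    | Sum.inl a₀, hx₀ =>
      left
      have hleft : ∀ x ∈ t, ∃ a : V, x = Sum.inl a := by
        rintro (a | b) hx
        · exact ⟨a, rfl⟩
        · exact absurd (hadj _ hx₀ _ hx (by simp)) (addK4_adj_inl_inr)
      have ht := eq_image_preimage_of_forall Sum.inl_injective hleft
      refine ⟨t.preimage Sum.inl (Set.injOn_of_injective Sum.inl_injective), ⟨?_, ?_⟩, ht⟩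
      · have := congrArg Finset.card ht
        rwa [Finset.card_image_of_injective _ Sum.inl_injective, hc, eq_comm] at this
      · intro x hx y hy hxy
        exact hadj _ (Finset.mem_preimage.1 hx) _ (Finset.mem_preimage.1 hy)
          (fun hh => hxy (Sum.inl_injective hh))
    | Sum.inr p, hx₀ =>
      right
      have hright : ∀ x ∈ t, ∃ a : Fin 4, x = Sum.inr (p.1, a) := by
        rintro (a | q) hx
        · exact absurd (hadj _ hx _ hx₀ (by simp)) (addK4_adj_inl_inr)
        · by_cases hq : q = p
          · exact ⟨p.2, by rw [hq]⟩
          · obtain ⟨h1, -⟩ := (addK4_adj_inr_inr).1 (hadj _ hx _ hx₀ (by simp [hq]))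
            exact ⟨q.2, by rw [← h1]⟩
      have ht := eq_image_preimage_of_forall (inr_i_injective p.1) hright
      refine ⟨p.1, _, ?_, by rw [copyTri]; exact ht⟩
      have := congrArg Finset.card ht
      rwa [Finset.card_image_of_injective _ (inr_i_injective p.1), hc, eq_comm] at this
  · rintro (⟨s, hs, rfl⟩ | ⟨i, s, hs, rfl⟩)
    · exact isTriangle_image_inl hs
    · exact isTriangle_copyTri hs
end copyTri

section api
variable {G : SimpleGraph V} [Fintype V] [DecidableEq V]

lemma le_nuT {P : Finset (Finset V)} (hP : IsTrianglePacking G P) : P.card ≤ nuT G :=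
  le_csSup ⟨Fintype.card (Finset V), by rintro n ⟨Q, -, rfl⟩; exact Finset.card_le_univ Q⟩
    ⟨P, hP, rfl⟩

lemma nuT_spec (G : SimpleGraph V) :
    ∃ P : Finset (Finset V), IsTrianglePacking G P ∧ P.card = nuT G := by
  have h1 : (0 : ℕ) ∈ {n | ∃ P : Finset (Finset V), IsTrianglePacking G P ∧ P.card = n} :=
    ⟨∅, ⟨fun t ht => absurd ht (Finset.notMem_empty t),
      fun t ht => absurd ht (Finset.notMem_empty t)⟩, rfl⟩
  have h2 : BddAbove {n | ∃ P : Finset (Finset V), IsTrianglePacking G P ∧ P.card = n} :=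
    ⟨Fintype.card (Finset V), by rintro n ⟨Q, -, rfl⟩; exact Finset.card_le_univ Q⟩
  exact Nat.sSup_mem ⟨0, h1⟩ h2

lemma tauT_le {C : Finset (Sym2 V)} (hC : IsTriangleCover G C) : tauT G ≤ C.card :=
  Nat.sInf_le ⟨C, hC, rfl⟩

lemma tauT_spec (G : SimpleGraph V) :
    ∃ C : Finset (Sym2 V), IsTriangleCover G C ∧ C.card = tauT G := by
  have hne : {n | ∃ C : Finset (Sym2 V), IsTriangleCover G C ∧ C.card = n}.Nonempty := by
    refine ⟨_, (Set.toFinite G.edgeSet).toFinset, ⟨fun e he => (Set.Finite.mem_toFinset _).1 he,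
      ?_⟩, rfl⟩
    intro t ht
    obtain ⟨x, hx, y, hy, hxy⟩ := Finset.one_lt_card.1 (by rw [ht.1]; omega)
    exact ⟨s(x, y), mem_triEdges.2 ⟨x, hx, y, hy, hxy, rfl⟩,
      (Set.Finite.mem_toFinset _).2 (ht.2 x hx y hy hxy)⟩
  exact Nat.sInf_mem hne
end api


section main
variable [Fintype V] [DecidableEq V] {G : SimpleGraph V} {k : ℕ}

lemma disjoint_triEdges_of_disjoint {t₁ t₂ : Finset V} (h : Disjoint t₁ t₂) :
    Disjoint (triEdges t₁) (triEdges t₂) := by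
  rw [Finset.disjoint_left]
  intro e he1 he2
  obtain ⟨x, hx, y, hy, hxy, rfl⟩ := mem_triEdges.1 he1
  obtain ⟨x', hx', y', hy', hxy', heq⟩ := mem_triEdges.1 he2
  rcases Sym2.eq_iff.1 heq.symm with ⟨rfl, rfl⟩ | ⟨rfl, rfl⟩
  · exact Finset.disjoint_left.1 h hx hx'
  · exact Finset.disjoint_left.1 h hx hy'

lemma copyTri_disjoint {i j : Fin k} (hij : i ≠ j) (s s' : Finset (Fin 4)) :
    Disjoint (copyTri (V := V) i s) (copyTri j s') := by
  rw [Finset.disjoint_left]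
  intro x hx hx'
  obtain ⟨a, -, rfl⟩ := mem_copyTri.1 hx
  obtain ⟨b, -, hb⟩ := mem_copyTri.1 hx'
  exact hij (Prod.mk.inj (Sum.inr_injective hb)).1

lemma copyTri_inj {i j : Fin k} {s s' : Finset (Fin 4)} (hs : s.Nonempty)
    (h : copyTri (V := V) i s = copyTri j s') : i = j ∧ s = s' := by
  obtain ⟨a, ha⟩ := hs
  have h1 : (Sum.inr (i, a) : V ⊕ (Fin k × Fin 4)) ∈ copyTri j s' := by
    rw [← h]; exact mem_copyTri.2 ⟨a, ha, rfl⟩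
  obtain ⟨b, -, hb⟩ := mem_copyTri.1 h1
  have hij : i = j := (Prod.mk.inj (Sum.inr_injective hb)).1
  subst hij
  exact ⟨rfl, Finset.image_injective (inr_i_injective i) h⟩

lemma numTris_addK4 : numTris (addK4 G k) = numTris G + 4 * k := by
  classical
  have hset : {t | IsTriangle (addK4 G k) t} =
      ((fun s : Finset V => s.image Sum.inl) '' {s | IsTriangle G s}) ∪
      ((fun p : Fin k × Finset (Fin 4) => copyTri (V := V) p.1 p.2) '' {p | p.2.card = 3}) := by
    ext t
    simp only [Set.mem_setOf_eq, Set.mem_union, Set.mem_image]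
    rw [isTriangle_addK4_iff]
    constructor
    · rintro (⟨s, hs, rfl⟩ | ⟨i, s, hs, rfl⟩)
      · exact Or.inl ⟨s, hs, rfl⟩
      · exact Or.inr ⟨(i, s), hs, rfl⟩
    · rintro (⟨s, hs, rfl⟩ | ⟨⟨i, s⟩, hs, rfl⟩)
      · exact Or.inl ⟨s, hs, rfl⟩
      · exact Or.inr ⟨i, s, hs, rfl⟩
  have hdisj : Disjoint
      ((fun s : Finset V => s.image Sum.inl) '' {s | IsTriangle G s})
      ((fun p : Fin k × Finset (Fin 4) => copyTri (V := V) p.1 p.2) '' {p | p.2.card = 3}) := by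
    rw [Set.disjoint_left]
    rintro t ⟨s, hs, rfl⟩ ⟨⟨i, s'⟩, hs', heq⟩
    have hne : s.Nonempty := Finset.card_pos.1 (by rw [hs.1]; omega)
    obtain ⟨a, ha⟩ := hne
    have heq' : copyTri (V := V) i s' = s.image Sum.inl := heq
    have : (Sum.inl a : V ⊕ (Fin k × Fin 4)) ∈ copyTri (V := V) i s' := by
      rw [heq']; exact Finset.mem_image_of_mem _ ha
    obtain ⟨b, -, hb⟩ := mem_copyTri.1 this
    exact (Sum.inl_ne_inr hb).elim
  rw [numTris, hset, Set.ncard_union_eq hdisj (Set.toFinite _) (Set.toFinite _)]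
  congr 1
  · exact Set.ncard_image_of_injOn
      ((Finset.image_injective Sum.inl_injective).injOn)
  · rw [Set.ncard_image_of_injOn]
    · have hF : {p : Fin k × Finset (Fin 4) | p.2.card = 3} =
          ((Finset.univ ×ˢ Finset.univ.powersetCard 3 : Finset (Fin k × Finset (Fin 4))) :
            Set (Fin k × Finset (Fin 4))) := by
        ext ⟨i, s⟩
        simp [Finset.mem_powersetCard_univ]
      rw [hF, Set.ncard_coe_finset, Finset.card_product, Finset.card_powersetCard]
      simp [Nat.mul_comm]
    · rintro ⟨i, s⟩ hs ⟨j, s'⟩ hs' heq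
      have hs3 : s.card = 3 := hs
      have heq' : copyTri (V := V) i s = copyTri j s' := heq
      have hne : s.Nonempty := Finset.card_pos.1 (by rw [hs3]; omega)
      obtain ⟨hij, hss⟩ := copyTri_inj hne heq'
      exact Prod.ext hij hss

lemma k_le_nuT_addK4 : k ≤ nuT (addK4 G k) := by
  classical
  have hcard3 : ({0, 1, 2} : Finset (Fin 4)).card = 3 := by decide
  have hP : IsTrianglePacking (addK4 G k)
      ((Finset.univ : Finset (Fin k)).image fun i => copyTri (V := V) i {0, 1, 2}) := by
    constructor
    · rintro t ht
      obtain ⟨i, -, rfl⟩ := Finset.mem_image.1 ht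
      exact isTriangle_copyTri hcard3
    · rintro t₁ ht₁ t₂ ht₂ hne
      obtain ⟨i, -, rfl⟩ := Finset.mem_image.1 ht₁
      obtain ⟨j, -, rfl⟩ := Finset.mem_image.1 ht₂
      have hij : i ≠ j := fun h => hne (by rw [h])
      exact disjoint_triEdges_of_disjoint (copyTri_disjoint hij _ _)
  have hcard : ((Finset.univ : Finset (Fin k)).image
      fun i => copyTri (V := V) i {0, 1, 2}).card = k := by
    rw [Finset.card_image_of_injective, Finset.card_univ, Fintype.card_fin]
    intro i j hij
    exact (copyTri_inj ⟨0, by decide⟩ hij).1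
  calc k = _ := hcard.symm
    _ ≤ nuT (addK4 G k) := le_nuT hP


lemma preimage_image' {α β : Type*} [DecidableEq α] [DecidableEq β] {f : α → β} (hf : Function.Injective f)
    (s : Finset α) : (s.image f).preimage f (Set.injOn_of_injective hf) = s := by
  ext a
  simp [Finset.mem_preimage, hf.eq_iff]

lemma copyTri_not_disjoint {i : Fin k} {s₁ s₂ : Finset (Fin 4)} (h₁ : s₁.card = 3)
    (h₂ : s₂.card = 3) :
    ¬ Disjoint (triEdges (copyTri (V := V) i s₁)) (triEdges (copyTri i s₂)) := by
  have hu : (s₁ ∪ s₂).card ≤ 4 := le_trans (Finset.card_le_univ _) (by simp)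
  have hi : 2 ≤ (s₁ ∩ s₂).card := by
    have := Finset.card_union_add_card_inter s₁ s₂
    omega
  obtain ⟨x, hx, y, hy, hxy⟩ := Finset.one_lt_card.1 (by omega : 1 < (s₁ ∩ s₂).card)
  intro hd
  have hne : (Sum.inr (i, x) : V ⊕ (Fin k × Fin 4)) ≠ Sum.inr (i, y) :=
    fun h => hxy (Prod.mk.inj (Sum.inr_injective h)).2
  refine Finset.disjoint_left.1 hd
    (mem_triEdges.2 ⟨Sum.inr (i, x), mem_copyTri.2 ⟨x, (Finset.mem_inter.1 hx).1, rfl⟩,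
      Sum.inr (i, y), mem_copyTri.2 ⟨y, (Finset.mem_inter.1 hy).1, rfl⟩, hne, rfl⟩)
    (mem_triEdges.2 ⟨Sum.inr (i, x), mem_copyTri.2 ⟨x, (Finset.mem_inter.1 hx).2, rfl⟩,
      Sum.inr (i, y), mem_copyTri.2 ⟨y, (Finset.mem_inter.1 hy).2, rfl⟩, hne, rfl⟩)

lemma nuT_addK4_le : nuT (addK4 G k) ≤ nuT G + k := by
  classical
  obtain ⟨P, hP, hPcard⟩ := nuT_spec (addK4 G k)
  rw [← hPcard]
  set p : Finset (V ⊕ (Fin k × Fin 4)) → Prop :=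
    fun t => ∃ s : Finset V, IsTriangle G s ∧ t = s.image Sum.inl with hp
  set PL := P.filter p with hPLdef
  set PR := P.filter (fun t => ¬ p t) with hPRdef
  have hsplit : PL.card + PR.card = P.card := Finset.card_filter_add_card_filter_not _
  have hrep : ∀ t ∈ PL, t =
      (t.preimage Sum.inl (Set.injOn_of_injective Sum.inl_injective)).image Sum.inl := by
    intro t ht
    obtain ⟨-, s, hs, rfl⟩ := Finset.mem_filter.1 ht
    rw [preimage_image' Sum.inl_injective]
  have hL : PL.card ≤ nuT G := by
    set Q := PL.image (fun t => t.preimage Sum.inl (Set.injOn_of_injective Sum.inl_injective))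
      with hQdef
    have hQmem : ∀ s ∈ Q, IsTriangle G s ∧ s.image Sum.inl ∈ PL := by
      intro s hs
      obtain ⟨t, ht, rfl⟩ := Finset.mem_image.1 hs
      obtain ⟨htP, s', hs', rfl⟩ := Finset.mem_filter.1 ht
      rw [preimage_image' Sum.inl_injective]
      exact ⟨hs', ht⟩
    have hQcard : Q.card = PL.card := by
      apply Finset.card_image_of_injOn
      intro t₁ h₁ t₂ h₂ heq
      rw [hrep t₁ h₁, hrep t₂ h₂]
      simp only at heq
      rw [heq]
    have hQpack : IsTrianglePacking G Q := by
      constructor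
      · intro s hs; exact (hQmem s hs).1
      · intro s₁ h₁ s₂ h₂ hne
        have ht₁ := (hQmem s₁ h₁).2
        have ht₂ := (hQmem s₂ h₂).2
        have htne : (s₁.image Sum.inl : Finset (V ⊕ (Fin k × Fin 4))) ≠ s₂.image Sum.inl :=
          fun h => hne (Finset.image_injective Sum.inl_injective h)
        have hd := hP.2 _ (Finset.mem_of_mem_filter _ ht₁) _ (Finset.mem_of_mem_filter _ ht₂)
          htne
        rw [triEdges_image Sum.inl_injective, triEdges_image Sum.inl_injective] at hd
        exact (Finset.disjoint_image (Sym2.map.injective Sum.inl_injective)).1 hd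
    exact hQcard ▸ le_nuT hQpack
  have hR : PR.card ≤ k := by
    have hPRspec : ∀ t ∈ PR, ∃ i : Fin k, ∃ s : Finset (Fin 4), s.card = 3 ∧ t = copyTri i s := by
      intro t ht
      obtain ⟨htP, hnp⟩ := Finset.mem_filter.1 ht
      rcases isTriangle_addK4_iff.1 (hP.1 t htP) with hcase | hcase
      · exact absurd hcase hnp
      · exact hcase
    choose f g hfg1 hfg2 using hPRspec
    have hinj : PR.attach.card ≤ (Finset.univ : Finset (Fin k)).card := by
      apply Finset.card_le_card_of_injOn (fun t => f t.1 t.2) (fun _ _ => Finset.mem_univ _)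
      intro t₁ h₁ t₂ h₂ heq
      simp only at heq
      by_contra hne
      have hne' : (t₁ : Finset (V ⊕ (Fin k × Fin 4))) ≠ t₂.1 := fun h => hne (Subtype.ext h)
      have hd := hP.2 _ (Finset.mem_of_mem_filter _ t₁.2) _ (Finset.mem_of_mem_filter _ t₂.2)
        hne'
      rw [hfg2 t₁.1 t₁.2, hfg2 t₂.1 t₂.2, heq] at hd
      exact copyTri_not_disjoint (hfg1 t₁.1 t₁.2) (hfg1 t₂.1 t₂.2) hd
    rwa [Finset.card_attach, Finset.card_univ, Fintype.card_fin] at hinj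
  omega

lemma tauT_addK4_ge : tauT G + 2 * k ≤ tauT (addK4 G k) := by
  classical
  obtain ⟨C', hC', hcard⟩ := tauT_spec (addK4 G k)
  rw [← hcard]
  set DL := C'.filter (fun e => ∀ x ∈ e, x.isLeft) with hDLdef
  set D : Fin k → Finset (Sym2 (V ⊕ (Fin k × Fin 4))) :=
    fun i => C'.filter (fun e => ∀ x ∈ e, ∃ a : Fin 4, x = Sum.inr (i, a)) with hDdef
  have hsub : DL ∪ Finset.univ.biUnion D ⊆ C' :=
    Finset.union_subset (Finset.filter_subset _ _)
      (Finset.biUnion_subset.2 fun i _ => Finset.filter_subset _ _)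
  have hdisj1 : Disjoint DL (Finset.univ.biUnion D) := by
    rw [Finset.disjoint_left]
    intro e he1 he2
    obtain ⟨i, -, he2⟩ := Finset.mem_biUnion.1 he2
    have h1 := (Finset.mem_filter.1 he1).2 e.out.1 (Sym2.out_fst_mem e)
    obtain ⟨a, ha⟩ := (Finset.mem_filter.1 he2).2 e.out.1 (Sym2.out_fst_mem e)
    rw [ha] at h1
    exact absurd h1 (by simp)
  have hdisjD : ∀ i ∈ (Finset.univ : Finset (Fin k)), ∀ j ∈ Finset.univ, i ≠ j →
      Disjoint (D i) (D j) := by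
    intro i hi j hj hij
    rw [Finset.disjoint_left]
    intro e he1 he2
    obtain ⟨a, ha⟩ := (Finset.mem_filter.1 he1).2 e.out.1 (Sym2.out_fst_mem e)
    obtain ⟨b, hb⟩ := (Finset.mem_filter.1 he2).2 e.out.1 (Sym2.out_fst_mem e)
    rw [ha] at hb
    exact hij (Prod.mk.inj (Sum.inr_injective hb)).1
  have hcard2 : ∀ i, 2 ≤ (D i).card := by
    intro i
    have key : ∀ b : Fin 4, ∃ e ∈ D i, ∀ x ∈ e, ∃ a : Fin 4, a ≠ b ∧ x = Sum.inr (i, a) := by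
      intro b
      have htri : IsTriangle (addK4 G k) (copyTri (V := V) i (Finset.univ.erase b)) :=
        isTriangle_copyTri (by rw [Finset.card_erase_of_mem (Finset.mem_univ b)]; simp)
      obtain ⟨e, he, heC⟩ := hC'.2 _ htri
      have hmem : ∀ x ∈ e, ∃ a : Fin 4, a ≠ b ∧ x = Sum.inr (i, a) := by
        intro x hx
        obtain ⟨u, hu, v, hv, huv, rfl⟩ := mem_triEdges.1 he
        rcases Sym2.mem_iff.1 hx with rfl | rfl
        · obtain ⟨a, ha, rfl⟩ := mem_copyTri.1 hu
          exact ⟨a, Finset.ne_of_mem_erase ha, rfl⟩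
        · obtain ⟨a, ha, rfl⟩ := mem_copyTri.1 hv
          exact ⟨a, Finset.ne_of_mem_erase ha, rfl⟩
      exact ⟨e, Finset.mem_filter.2 ⟨heC, fun x hx => ⟨(hmem x hx).choose,
        (hmem x hx).choose_spec.2⟩⟩, hmem⟩
    obtain ⟨e₁, he₁D, he₁⟩ := key 0
    obtain ⟨c, -, hc⟩ := he₁ e₁.out.1 (Sym2.out_fst_mem e₁)
    obtain ⟨e₂, he₂D, he₂⟩ := key c
    have hne : e₁ ≠ e₂ := by
      intro h
      obtain ⟨a, hac, ha⟩ := he₂ e₁.out.1 (h ▸ Sym2.out_fst_mem e₁)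
      rw [hc] at ha
      exact hac (Prod.mk.inj (Sum.inr_injective ha)).2.symm
    exact Finset.one_lt_card.2 ⟨e₁, he₁D, e₂, he₂D, hne⟩
  have hDL : tauT G ≤ DL.card := by
    set C : Finset (Sym2 V) := Finset.univ.filter (fun e => Sym2.map Sum.inl e ∈ C') with hCdef
    have hcov : IsTriangleCover G C := by
      constructor
      · intro e he
        have heC : Sym2.map Sum.inl e ∈ C' := (Finset.mem_filter.1 he).2
        have hedge := hC'.1 _ heC
        induction e using Sym2.ind with
        | _ x y =>
          rw [Sym2.map_pair_eq] at hedge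
          exact (SimpleGraph.mem_edgeSet G).2
            (addK4_adj_inl_inl.1 ((SimpleGraph.mem_edgeSet _).1 hedge))
      · intro t ht
        obtain ⟨e', he't, he'C⟩ := hC'.2 _ (isTriangle_image_inl ht)
        rw [triEdges_image Sum.inl_injective] at he't
        obtain ⟨e, het, rfl⟩ := Finset.mem_image.1 he't
        exact ⟨e, het, Finset.mem_filter.2 ⟨Finset.mem_univ _, he'C⟩⟩
    have himg : C.image (Sym2.map Sum.inl) ⊆ DL := by
      intro e' he'
      obtain ⟨e, he, rfl⟩ := Finset.mem_image.1 he'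
      refine Finset.mem_filter.2 ⟨(Finset.mem_filter.1 he).2, ?_⟩
      intro x hx
      obtain ⟨a, -, rfl⟩ := Sym2.mem_map.1 hx
      rfl
    calc tauT G ≤ C.card := tauT_le hcov
      _ = (C.image (Sym2.map Sum.inl)).card :=
        (Finset.card_image_of_injective _ (Sym2.map.injective Sum.inl_injective)).symm
      _ ≤ DL.card := Finset.card_le_card himg
  have hsum : 2 * k ≤ ∑ i : Fin k, (D i).card := by
    calc 2 * k = ∑ _i : Fin k, 2 := by simp [Finset.sum_const, Nat.mul_comm]
      _ ≤ ∑ i : Fin k, (D i).card := Finset.sum_le_sum (fun i _ => hcard2 i)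
  calc tauT G + 2 * k ≤ DL.card + ∑ i : Fin k, (D i).card := Nat.add_le_add hDL hsum
    _ = (DL ∪ Finset.univ.biUnion D).card := by
      rw [Finset.card_union_of_disjoint hdisj1, Finset.card_biUnion hdisjD]
    _ ≤ C'.card := Finset.card_le_card hsub


end main

/-- If for some δ > 0 Tuza's conjecture holds for every graph `G` with
ν_t(G) ≥ (1/4 − δ)·|T_G|, then it holds for every graph. -/
theorem tuza_of_quarter {δ : ℝ} (hδ : 0 < δ)
    (h : ∀ (W : Type u) [Fintype W] [DecidableEq W] (G : SimpleGraph W),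
      (nuT G : ℝ) ≥ (1 / 4 - δ) * numTris G → tauT G ≤ 2 * nuT G) :
    ∀ (V : Type u) [Fintype V] [DecidableEq V] (G : SimpleGraph V),
      tauT G ≤ 2 * nuT G := by
  intro V _ _ G
  classical
  set T : ℕ := numTris G with hT
  set k : ℕ := Nat.ceil ((T : ℝ) / (16 * δ)) with hk
  have hknn : (T : ℝ) / (16 * δ) ≤ k := Nat.le_ceil _
  have hratio : (nuT (addK4 G k) : ℝ) ≥ (1 / 4 - δ) * numTris (addK4 G k) := by
    have h1 : (k : ℝ) ≤ nuT (addK4 G k) := by exact_mod_cast k_le_nuT_addK4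
    have h2 : (numTris (addK4 G k) : ℝ) = T + 4 * k := by
      rw [numTris_addK4]; push_cast; ring
    rw [ge_iff_le, h2]
    have hδk : (T : ℝ) / 4 ≤ 4 * δ * k := by
      have h16 : (0 : ℝ) < 16 * δ := by positivity
      have hTk : (T : ℝ) ≤ 16 * δ * k := by
        calc (T : ℝ) = (T / (16 * δ)) * (16 * δ) := by field_simp
          _ ≤ k * (16 * δ) := mul_le_mul_of_nonneg_right hknn h16.le
          _ = 16 * δ * k := by ring
      linarith
    have hexp : (1 / 4 - δ) * ((T : ℝ) + 4 * k) =
        T / 4 + k - δ * T - 4 * δ * k := by ring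
    have hδT : (0 : ℝ) ≤ δ * T := mul_nonneg hδ.le (Nat.cast_nonneg T)
    linarith
  have happ := h _ (addK4 G k) hratio
  have h3 := tauT_addK4_ge (G := G) (k := k)
  have h4 := nuT_addK4_le (G := G) (k := k)
  omega
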